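/- Let Ω̃ be symmetric g×g with Im Ω̃ > 0, let Φ be a complex g×n matrix and P an integer g×n matrix with ΦΩ = Ω̃P where Ω = PᵀΩ̃P, and suppose PᵀΦ is the identity n×n matrix. Then for the theta function θ(·|Ω̃) = θ[0,0](·|Ω̃) of ℂ^g and any γ ∈ ℂ^g, the function F(z) = θ(Φz − γ|Ω̃) on ℂ^n satisfies F(z + Ωe_j) = exp(−πi⟨e_j, Ωe_j⟩ − 2πi⟨e_j, z − Pᵀγ⟩)·F(z) for each 1 ≤ j ≤ n. -/
import Mathlib


open scoped Matrix
open Complex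

noncomputable def thetaTerm {ι : Type} [Fintype ι] (Ω : Matrix ι ι ℂ)
    (a b z : ι → ℂ) (n : ι → ℤ) : ℂ :=
  Complex.exp ((Real.pi : ℂ) * Complex.I *
      ((fun i => (n i : ℂ) + a i) ⬝ᵥ Ω.mulVec fun i => (n i : ℂ) + a i) +
    2 * (Real.pi : ℂ) * Complex.I *
      ((fun i => (n i : ℂ) + a i) ⬝ᵥ (z + b)))

noncomputable def theta {ι : Type} [Fintype ι] (Ω : Matrix ι ι ℂ)
    (a b z : ι → ℂ) : ℂ :=
  ∑' n : ι → ℤ, thetaTerm Ω a b z n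

open Matrix in
lemma dot_symm_aux {ι : Type} [Fintype ι] (Om : Matrix ι ι ℂ)
    (hsymm : Om.IsSymm) (u v : ι → ℂ) :
    u ⬝ᵥ Om.mulVec v = v ⬝ᵥ Om.mulVec u := by
  rw [Matrix.dotProduct_mulVec, ← hsymm.eq, Matrix.vecMul_transpose,
    dotProduct_comm, hsymm.eq]

open Matrix in
lemma theta_translate_aux {ι : Type} [Fintype ι] (Om : Matrix ι ι ℂ)
    (hsymm : Om.IsSymm) (p : ι → ℤ) (w : ι → ℂ) :
    theta Om 0 0 (w + Om.mulVec (fun i => (p i : ℂ))) =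
    Complex.exp (-(Real.pi : ℂ) * Complex.I *
        ((fun i => (p i : ℂ)) ⬝ᵥ Om.mulVec (fun i => (p i : ℂ)))
      - 2 * (Real.pi : ℂ) * Complex.I * ((fun i => (p i : ℂ)) ⬝ᵥ w)) *
      theta Om 0 0 w := by
  set pc : ι → ℂ := fun i => (p i : ℂ) with hpc
  set C : ℂ := -(Real.pi : ℂ) * Complex.I * (pc ⬝ᵥ Om.mulVec pc)
      - 2 * (Real.pi : ℂ) * Complex.I * (pc ⬝ᵥ w) with hC
  have key : ∀ m : ι → ℤ, thetaTerm Om 0 0 (w + Om.mulVec pc) m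
      = Complex.exp C * thetaTerm Om 0 0 w (m + p) := by
    intro m
    set mc : ι → ℂ := fun i => (m i : ℂ) with hmc
    have hcast : (fun i => (((m + p) i : ℤ) : ℂ) + (0 : ι → ℂ) i) = mc + pc := by
      funext i
      simp [hmc, hpc]
    have hcast2 : (fun i => ((m i : ℤ) : ℂ) + (0 : ι → ℂ) i) = mc := by
      funext i; simp [hmc]
    unfold thetaTerm
    rw [hcast, hcast2, ← Complex.exp_add]
    congr 1
    have hswap : pc ⬝ᵥ Om.mulVec mc = mc ⬝ᵥ Om.mulVec pc :=
      dot_symm_aux Om hsymm pc mc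
    simp only [Matrix.mulVec_add, dotProduct_add, add_dotProduct,
      add_zero, hswap]
    ring
  calc theta Om 0 0 (w + Om.mulVec pc)
      = ∑' m : ι → ℤ, Complex.exp C * thetaTerm Om 0 0 w (m + p) :=
        tsum_congr key
    _ = Complex.exp C * ∑' m : ι → ℤ, thetaTerm Om 0 0 w (m + p) :=
        tsum_mul_left
    _ = Complex.exp C * theta Om 0 0 w := by
        rw [theta]
        congr 1
        exact (Equiv.addRight p).tsum_eq (thetaTerm Om 0 0 w)

/-- quasi-periodicity of F(z) = θ(Φz − γ|Ω̃) under translation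
by Ωe_j, where Ω = PᵀΩ̃P, ΦΩ = Ω̃P and PᵀΦ = 1. -/
theorem restricted_theta_quasi_periodicity {g n : ℕ}
    (Om : Matrix (Fin g) (Fin g) ℂ)
    (hsymm : Om.IsSymm) (hpos : (Om.map Complex.im).PosDef)
    (Φ : Matrix (Fin g) (Fin n) ℂ) (P : Matrix (Fin g) (Fin n) ℤ)
    (Ω : Matrix (Fin n) (Fin n) ℂ)
    (hΩ : Ω = (P.map (Int.cast : ℤ → ℂ))ᵀ * Om * P.map (Int.cast : ℤ → ℂ))
    (hΦΩ : Φ * Ω = Om * P.map (Int.cast : ℤ → ℂ))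
    (hPΦ : (P.map (Int.cast : ℤ → ℂ))ᵀ * Φ = 1)
    (γ : Fin g → ℂ) (z : Fin n → ℂ) (j : Fin n) :
    theta Om 0 0 (Φ.mulVec (z + Ω.mulVec (Pi.single j 1)) - γ) =
      Complex.exp (-(Real.pi : ℂ) * Complex.I *
          ((Pi.single j 1 : Fin n → ℂ) ⬝ᵥ Ω.mulVec (Pi.single j 1))
        - 2 * (Real.pi : ℂ) * Complex.I *
          ((Pi.single j 1 : Fin n → ℂ) ⬝ᵥ
            (z - ((P.map (Int.cast : ℤ → ℂ))ᵀ).mulVec γ))) *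
      theta Om 0 0 (Φ.mulVec z - γ) := by
  set Pc : Matrix (Fin g) (Fin n) ℂ := P.map (Int.cast : ℤ → ℂ) with hPc
  set ej : Fin n → ℂ := Pi.single j 1 with hej
  set p : Fin g → ℤ := fun i => P i j with hp
  set pc : Fin g → ℂ := fun i => (p i : ℂ) with hpcdef
  have hPcej : Pc.mulVec ej = pc := by
    funext i
    simp [hej, Matrix.mulVec_single, hPc, hpcdef, hp]
  -- pc ⬝ᵥ u = ej ⬝ᵥ Pcᵀ *ᵥ u
  have hdual : ∀ u : Fin g → ℂ, pc ⬝ᵥ u = ej ⬝ᵥ Pcᵀ.mulVec u := by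
    intro u
    rw [Matrix.dotProduct_mulVec, Matrix.vecMul_transpose, hPcej]
  -- the translated argument
  have harg : Φ.mulVec (z + Ω.mulVec ej) - γ
      = (Φ.mulVec z - γ) + Om.mulVec pc := by
    rw [Matrix.mulVec_add, Matrix.mulVec_mulVec, hΦΩ, ← Matrix.mulVec_mulVec,
      hPcej]
    abel
  have h1 : pc ⬝ᵥ Om.mulVec pc = ej ⬝ᵥ Ω.mulVec ej := by
    rw [hdual, Matrix.mulVec_mulVec, ← hPcej, Matrix.mulVec_mulVec,
      ← hΩ]
  have h2 : pc ⬝ᵥ (Φ.mulVec z - γ) = ej ⬝ᵥ (z - Pcᵀ.mulVec γ) := by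
    rw [dotProduct_sub, dotProduct_sub, hdual, hdual,
      Matrix.mulVec_mulVec, hPΦ, Matrix.one_mulVec]
  rw [harg, theta_translate_aux Om hsymm p (Φ.mulVec z - γ), ← hpcdef, h1, h2]
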